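/- Let A be a set and let x, y, z, w ∈ A with x ≠ y and z ≠ w. Then in the lattice Equ(A) of equivalence relations on A, equ(x,y) ⊓ (equ(x,z) ⊔ equ(w,y)) ⊓ (equ(x,w) ⊔ equ(z,y)) equals the bottom element (the identity relation). -/

import Mathlib

/-- The least equivalence relation on `A` identifying `u` and `v`
(its only nonsingleton block is `{u, v}`; it is `⊥` when `u = v`). -/
def equ {A : Type*} (u v : A) : Setoid A := sInf {s : Setoid A | s u v}

/-! In `equ x y` two distinct elements are related only if they are `x` and `y`, and since
`x ≠ y` the meet is `⊥` as soon as it does not relate `x` and `y`. The join `equ a b ⊔ equ c d`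
relates `a` to `c` only if the pairs `{a, b}` and `{c, d}` meet, as it lies below the kernel of
membership in `{a, b}`. With `z ≠ w` and `x ≠ y`, the two joins cannot both relate `x` and `y`. -/

section

variable {A : Type*}

lemma equ_le {u v : A} {s : Setoid A} (h : s u v) : equ u v ≤ s :=
  sInf_le h

lemma equ_rel_self (u v : A) : equ u v u v :=
  fun _ hs => hs

lemma equ_comm (u v : A) : equ u v = equ v u := by
  unfold equ
  congr 1
  ext s
  exact s.comm'

lemma equ_apply_iff {u v a b : A} :
    equ u v a b ↔ a = b ∨ a = u ∧ b = v ∨ a = v ∧ b = u := by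
  classical
  constructor
  · intro h
    -- `equ u v` lies below the kernel of the map sending `v` to `u` and fixing everything else.
    have hker : Setoid.ker (fun t => if t = v then u else t) a b :=
      Setoid.le_def.mp (equ_le (by simp [Setoid.ker_def])) h
    rw [Setoid.ker_def] at hker
    by_cases ha : a = v <;> by_cases hb : b = v <;> simp_all
  · rintro (rfl | ⟨rfl, rfl⟩ | ⟨rfl, rfl⟩)
    · exact Setoid.refl' _ a
    · exact equ_rel_self a b
    · exact Setoid.symm' _ (equ_rel_self b a)

lemma eq_bot_of_le_equ {u v : A} {s : Setoid A} (hs : s ≤ equ u v) (huv : ¬ s u v) :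
    s = ⊥ := by
  refine le_bot_iff.mp (Setoid.le_def.mpr fun {a b} hab => ?_)
  rcases equ_apply_iff.mp (Setoid.le_def.mp hs hab) with rfl | ⟨rfl, rfl⟩ | ⟨rfl, rfl⟩
  · exact Setoid.refl' _ a
  · exact absurd hab huv
  · exact absurd (Setoid.symm' _ hab) huv

lemma eq_or_eq_of_equ_sup_equ {a b c d : A} (h : (equ a b ⊔ equ c d) a c) :
    c = a ∨ c = b ∨ d = a ∨ d = b := by
  by_contra! hcd
  have hle : equ a b ⊔ equ c d ≤ Setoid.ker (fun t => t = a ∨ t = b) :=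
    sup_le (equ_le (by simp [Setoid.ker_def])) (equ_le (by simp [Setoid.ker_def, hcd]))
  have := Setoid.ker_def.mp (Setoid.le_def.mp hle h)
  simp_all

end

/-- If `x ≠ y` and `z ≠ w`, then in the lattice `Equ(A) = Setoid A` of equivalence
relations on `A` we have
`equ x y ⊓ (equ x z ⊔ equ w y) ⊓ (equ x w ⊔ equ z y) = ⊥`,
where `⊥` is the identity relation. -/
theorem equ_triple_meet_eq_bot {A : Type*} (x y z w : A) (hxy : x ≠ y) (hzw : z ≠ w) :
    equ x y ⊓ (equ x z ⊔ equ w y) ⊓ (equ x w ⊔ equ z y) = ⊥ := by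
  refine eq_bot_of_le_equ (inf_le_left.trans inf_le_left) fun h => ?_
  obtain ⟨⟨-, h₁⟩, h₂⟩ := h
  rw [equ_comm w y] at h₁
  rw [equ_comm z y] at h₂
  have hy₁ := eq_or_eq_of_equ_sup_equ h₁
  have hy₂ := eq_or_eq_of_equ_sup_equ h₂
  grind
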